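/- arXiv:0807.3276 — 6 statements merged into one kernel-verified Lean document; each statement's English description precedes it below -/
import Mathlib

section
/- Let N be an n-dimensional orientable manifold with volume form Ω, and let {Y₁, ..., Y_{n-1}} be a solvable structure for the 1-dimensional distribution D = span(Z), meaning Z, Y₁,...,Y_{n-1} form a frame, and setting D_0 = span(Z), D_h = span(Z, Y₁,...,Y_h), one has [Y_h, D_{h-1}] ⊆ D_{h-1} for all h. Then the 1-form ω_{n-1} = (1/Δ) ι_{Y₁} ⋯ ι_{Y_{n-2}} ι_Z Ω, where Δ = ι_{Y₁} ⋯ ι_{Y_{n-1}} ι_Z Ω, is closed: dω_{n-1} = 0. -/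
/-- Lie bracket of vector fields on `ℝⁿ`. -/
noncomputable def vbracket {n : ℕ} (X Y : (Fin n → ℝ) → (Fin n → ℝ)) :
    (Fin n → ℝ) → (Fin n → ℝ) :=
  fun p => fderiv ℝ Y p (X p) - fderiv ℝ X p (Y p)

/-- `Δ = ι_{Y₁} ⋯ ι_{Y_{n-1}} ι_Z Ω = ± Ω(Z, Y₁, ..., Y_{n-1})`, here with `n = m+2`. -/
noncomputable def solvDelta {m : ℕ}
    (Ω : (Fin (m + 2) → ℝ) → AlternatingMap ℝ (Fin (m + 2) → ℝ) ℝ (Fin (m + 2)))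
    (Z : (Fin (m + 2) → ℝ) → (Fin (m + 2) → ℝ))
    (Y : Fin (m + 1) → (Fin (m + 2) → ℝ) → (Fin (m + 2) → ℝ))
    (p : Fin (m + 2) → ℝ) : ℝ :=
  Ω p (Fin.cons (Z p) (fun j => Y j p))

/-- The 1-form `ω_{n-1} = (1/Δ) ι_{Y₁} ⋯ ι_{Y_{n-2}} ι_Z Ω`, i.e. (up to sign)
`v ↦ Ω(Z, Y₁, ..., Y_{n-2}, v)/Δ`: the last field `Y_{n-1}` is replaced by the
argument `v`. -/
noncomputable def omegaLast {m : ℕ}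
    (Ω : (Fin (m + 2) → ℝ) → AlternatingMap ℝ (Fin (m + 2) → ℝ) ℝ (Fin (m + 2)))
    (Z : (Fin (m + 2) → ℝ) → (Fin (m + 2) → ℝ))
    (Y : Fin (m + 1) → (Fin (m + 2) → ℝ) → (Fin (m + 2) → ℝ))
    (p : Fin (m + 2) → ℝ) (v : Fin (m + 2) → ℝ) : ℝ :=
  Ω p (Fin.cons (Z p) (Function.update (fun j => Y j p) (Fin.last m) v)) / solvDelta Ω Z Y p

/-- Exterior derivative of a 1-form `ω` on `ℝⁿ` evaluated on a pair of constant vector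
fields: `dω_p(v, w) = D_v(ω(w))(p) - D_w(ω(v))(p)`. -/
noncomputable def extDer {n : ℕ} (ω : (Fin n → ℝ) → (Fin n → ℝ) → ℝ)
    (p v w : Fin n → ℝ) : ℝ :=
  fderiv ℝ (fun q => ω q w) p v - fderiv ℝ (fun q => ω q v) p w

/-- The distribution `D_h = span(Z, Y₁, ..., Y_h)` at a point, with `Y_j` for `j < h`. -/
noncomputable def Dspan {n r : ℕ}
    (Z : (Fin n → ℝ) → (Fin n → ℝ)) (Y : Fin r → (Fin n → ℝ) → (Fin n → ℝ))
    (h : Fin r) (p : Fin n → ℝ) : Submodule ℝ (Fin n → ℝ) :=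
  Submodule.span ℝ (insert (Z p) ((fun j => Y j p) '' {j | j < h}))

/-! ### Auxiliary general lemmas -/

lemma lin_expand {n : ℕ} (L : (Fin n → ℝ) →ₗ[ℝ] ℝ) (v : Fin n → ℝ) :
    L v = ∑ i, v i * L (Pi.single i 1) := by
  conv_lhs => rw [← Finset.univ_sum_single v]
  rw [map_sum]
  congr 1; funext i
  have h : Pi.single i (v i) = (v i) • (Pi.single i (1:ℝ) : Fin n → ℝ) := by
    rw [← Pi.single_smul]; simp
  rw [h, map_smul]; simp

lemma fderiv_comp_apply' {n : ℕ} (W : (Fin n → ℝ) → (Fin n → ℝ)) (p u : Fin n → ℝ)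
    (hW : DifferentiableAt ℝ W p) (i : Fin n) :
    fderiv ℝ (fun q => W q i) p u = fderiv ℝ W p u i := by
  have h : HasFDerivAt (fun q => W q i)
      ((ContinuousLinearMap.proj i : (Fin n → ℝ) →L[ℝ] ℝ).comp (fderiv ℝ W p)) p :=
    ((ContinuousLinearMap.proj i : (Fin n → ℝ) →L[ℝ] ℝ).hasFDerivAt).comp p hW.hasFDerivAt
  rw [h.fderiv]; rfl

lemma fderiv_form_field {n : ℕ} (ω : (Fin n → ℝ) → (Fin n → ℝ) → ℝ)
    (Lω : (Fin n → ℝ) → (Fin n → ℝ) →ₗ[ℝ] ℝ) (hLω : ∀ q v, Lω q v = ω q v)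
    (hdiff : ∀ (w q : Fin n → ℝ), DifferentiableAt ℝ (fun q' => ω q' w) q)
    (W : (Fin n → ℝ) → (Fin n → ℝ)) (hW : Differentiable ℝ W) (p u : Fin n → ℝ) :
    fderiv ℝ (fun q => ω q (W q)) p u
      = fderiv ℝ (fun q => ω q (W p)) p u + ω p (fderiv ℝ W p u) := by
  have expand : ∀ (q v : Fin n → ℝ), ω q v = ∑ i, v i * ω q (Pi.single i 1) := by
    intro q v
    rw [← hLω q v, lin_expand]
    simp only [hLω]
  have hdW : ∀ i, DifferentiableAt ℝ (fun q => W q i) p := fun i =>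
    (((ContinuousLinearMap.proj i : (Fin n → ℝ) →L[ℝ] ℝ).differentiable).comp hW) p
  have e1 : (fun q => ω q (W q)) = fun q => ∑ i, W q i * ω q (Pi.single i 1) :=
    funext fun q => expand q (W q)
  have hterm : ∀ i : Fin n, DifferentiableAt ℝ
      (fun q => W q i * ω q (Pi.single i 1)) p :=
    fun i => (hdW i).mul (hdiff (Pi.single i 1) p)
  rw [e1, fderiv_fun_sum (fun i _ => hterm i)]
  rw [ContinuousLinearMap.sum_apply]
  have e2 : ∀ i : Fin n, fderiv ℝ (fun q => W q i * ω q (Pi.single i 1)) p u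
      = W p i * fderiv ℝ (fun q => ω q (Pi.single i 1)) p u
        + fderiv ℝ W p u i * ω p (Pi.single i 1) := by
    intro i
    rw [fderiv_fun_mul (hdW i) (hdiff (Pi.single i 1) p)]
    simp only [ContinuousLinearMap.add_apply, ContinuousLinearMap.smul_apply, smul_eq_mul]
    rw [fderiv_comp_apply' W p u (hW p) i]; ring
  simp only [e2]
  rw [Finset.sum_add_distrib]
  congr 1
  · have e3 : (fun q => ω q (W p)) = fun q => ∑ i, W p i * ω q (Pi.single i 1) :=
      funext fun q => expand q (W p)
    rw [e3, fderiv_fun_sum (fun i _ => (hdiff (Pi.single i 1) p).const_mul _)]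
    rw [ContinuousLinearMap.sum_apply]
    congr 1; funext i
    rw [fderiv_const_mul (hdiff (Pi.single i 1) p)]
    simp
  · rw [expand p (fderiv ℝ W p u)]

/-! ### Structure-specific lemmas -/

section Solv

variable {m : ℕ}
  (Ω : (Fin (m + 2) → ℝ) → AlternatingMap ℝ (Fin (m + 2) → ℝ) ℝ (Fin (m + 2)))
  (Z : (Fin (m + 2) → ℝ) → (Fin (m + 2) → ℝ))
  (Y : Fin (m + 1) → (Fin (m + 2) → ℝ) → (Fin (m + 2) → ℝ))

/-- The frame as a single family of vector fields. -/
noncomputable def solvE : Fin (m + 2) → ((Fin (m + 2) → ℝ) → (Fin (m + 2) → ℝ)) :=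
  Fin.cons Z Y

lemma solvE_at (p : Fin (m + 2) → ℝ) :
    (fun j => solvE Z Y j p) = Fin.cons (Z p) (fun j => Y j p) := by
  funext j
  induction j using Fin.cases <;> simp [solvE]

lemma omegaLast_update (p v : Fin (m + 2) → ℝ) :
    omegaLast Ω Z Y p v
      = Ω p (Function.update (Fin.cons (Z p) (fun j => Y j p)) (Fin.last (m + 1)) v)
          / solvDelta Ω Z Y p := by
  unfold omegaLast
  rw [Fin.cons_update, Fin.succ_last]

/-- `omegaLast` at a point, as a linear map. -/
noncomputable def omegaL (p : Fin (m + 2) → ℝ) : (Fin (m + 2) → ℝ) →ₗ[ℝ] ℝ where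
  toFun v := omegaLast Ω Z Y p v
  map_add' a b := by
    simp only [omegaLast_update, AlternatingMap.map_update_add, add_div]
  map_smul' c a := by
    simp only [omegaLast_update, AlternatingMap.map_update_smul, RingHom.id_apply,
      smul_eq_mul, mul_div_assoc]

lemma omegaL_apply (p v : Fin (m + 2) → ℝ) :
    omegaL Ω Z Y p v = omegaLast Ω Z Y p v := rfl

lemma omegaLast_Z (p : Fin (m + 2) → ℝ) : omegaLast Ω Z Y p (Z p) = 0 := by
  unfold omegaLast
  rw [(Ω p).map_eq_zero_of_eq _
    (i := (0 : Fin (m + 2))) (j := (Fin.last m).succ) ?_ (Fin.succ_ne_zero _).symm]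
  · exact zero_div _
  · simp

lemma omegaLast_Y_ne (p : Fin (m + 2) → ℝ) (j : Fin (m + 1)) (hj : j ≠ Fin.last m) :
    omegaLast Ω Z Y p (Y j p) = 0 := by
  unfold omegaLast
  rw [(Ω p).map_eq_zero_of_eq _
    (i := j.succ) (j := (Fin.last m).succ) ?_ (by simpa using hj)]
  · exact zero_div _
  · simp [Function.update_apply, hj]

lemma omegaLast_Y_last (p : Fin (m + 2) → ℝ) (hΔ : solvDelta Ω Z Y p ≠ 0) :
    omegaLast Ω Z Y p (Y (Fin.last m) p) = 1 := by
  unfold omegaLast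
  rw [Function.update_eq_self]
  exact div_self hΔ

end Solv

section Solv2

variable {m : ℕ}
  {Ω : (Fin (m + 2) → ℝ) → AlternatingMap ℝ (Fin (m + 2) → ℝ) ℝ (Fin (m + 2))}
  {Z : (Fin (m + 2) → ℝ) → (Fin (m + 2) → ℝ)}
  {Y : Fin (m + 1) → (Fin (m + 2) → ℝ) → (Fin (m + 2) → ℝ)}

lemma solvDelta_ne_zero (hΩ : ∀ p, Ω p ≠ 0)
    (hframe : ∀ p, LinearIndependent ℝ (Fin.cons (Z p) (fun j => Y j p) :
      Fin (m + 2) → (Fin (m + 2) → ℝ))) (p : Fin (m + 2) → ℝ) :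
    solvDelta Ω Z Y p ≠ 0 := by
  have hcard : Fintype.card (Fin (m + 2)) = Module.finrank ℝ (Fin (m + 2) → ℝ) := by
    simp [Module.finrank_fin_fun]
  let b := basisOfLinearIndependentOfCardEqFinrank (hframe p) hcard
  have hb : ⇑b = (Fin.cons (Z p) (fun j => Y j p) : Fin (m + 2) → (Fin (m + 2) → ℝ)) :=
    coe_basisOfLinearIndependentOfCardEqFinrank _ _
  have : Ω p ⇑b ≠ 0 := (AlternatingMap.map_basis_ne_zero_iff b (Ω p)).mpr (hΩ p)
  rw [hb] at this
  exact this

lemma solvE_smooth (hZ : ContDiff ℝ (⊤ : ℕ∞) Z) (hY : ∀ j, ContDiff ℝ (⊤ : ℕ∞) (Y j)) :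
    ∀ j, ContDiff ℝ (⊤ : ℕ∞) (solvE Z Y j) := by
  intro j
  induction j using Fin.cases with
  | zero => exact hZ
  | succ j => exact hY j

lemma solvDelta_smooth
    (hΩsm : ∀ V : Fin (m + 2) → (Fin (m + 2) → ℝ) → (Fin (m + 2) → ℝ),
      (∀ j, ContDiff ℝ (⊤ : ℕ∞) (V j)) → ContDiff ℝ (⊤ : ℕ∞) (fun p => Ω p (fun j => V j p)))
    (hZ : ContDiff ℝ (⊤ : ℕ∞) Z) (hY : ∀ j, ContDiff ℝ (⊤ : ℕ∞) (Y j)) :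
    ContDiff ℝ (⊤ : ℕ∞) (solvDelta Ω Z Y) := by
  have h := hΩsm (solvE Z Y) (solvE_smooth hZ hY)
  have e : (fun p => Ω p (fun j => solvE Z Y j p)) = solvDelta Ω Z Y := by
    funext p
    rw [solvE_at]
    rfl
  rwa [e] at h

lemma omegaNum_smooth
    (hΩsm : ∀ V : Fin (m + 2) → (Fin (m + 2) → ℝ) → (Fin (m + 2) → ℝ),
      (∀ j, ContDiff ℝ (⊤ : ℕ∞) (V j)) → ContDiff ℝ (⊤ : ℕ∞) (fun p => Ω p (fun j => V j p)))
    (hZ : ContDiff ℝ (⊤ : ℕ∞) Z) (hY : ∀ j, ContDiff ℝ (⊤ : ℕ∞) (Y j)) (w : Fin (m + 2) → ℝ) :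
    ContDiff ℝ (⊤ : ℕ∞) (fun q =>
      Ω q (Function.update (Fin.cons (Z q) (fun j => Y j q)) (Fin.last (m + 1)) w)) := by
  have h := hΩsm (Function.update (solvE Z Y) (Fin.last (m + 1)) (fun _ => w)) ?_
  · have e : ∀ q : Fin (m + 2) → ℝ,
        (fun j => Function.update (solvE Z Y) (Fin.last (m + 1)) (fun _ => w) j q)
          = Function.update (Fin.cons (Z q) (fun j => Y j q)) (Fin.last (m + 1)) w := by
      intro q
      funext j
      by_cases hj : j = Fin.last (m + 1)
      · subst hj; simp
      · rw [Function.update_of_ne hj, Function.update_of_ne hj, ← solvE_at]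
    simpa only [e] using h
  · intro j
    by_cases hj : j = Fin.last (m + 1)
    · subst hj; simp; exact contDiff_const
    · rw [Function.update_of_ne hj]
      exact solvE_smooth hZ hY j

lemma omegaLast_diff
    (hΩsm : ∀ V : Fin (m + 2) → (Fin (m + 2) → ℝ) → (Fin (m + 2) → ℝ),
      (∀ j, ContDiff ℝ (⊤ : ℕ∞) (V j)) → ContDiff ℝ (⊤ : ℕ∞) (fun p => Ω p (fun j => V j p)))
    (hΩ : ∀ p, Ω p ≠ 0) (hZ : ContDiff ℝ (⊤ : ℕ∞) Z) (hY : ∀ j, ContDiff ℝ (⊤ : ℕ∞) (Y j))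
    (hframe : ∀ p, LinearIndependent ℝ (Fin.cons (Z p) (fun j => Y j p) :
      Fin (m + 2) → (Fin (m + 2) → ℝ)))
    (w q : Fin (m + 2) → ℝ) :
    DifferentiableAt ℝ (fun q' => omegaLast Ω Z Y q' w) q := by
  have e : (fun q' => omegaLast Ω Z Y q' w) = fun q' =>
      Ω q' (Function.update (Fin.cons (Z q') (fun j => Y j q')) (Fin.last (m + 1)) w)
        / solvDelta Ω Z Y q' := by
    funext q'
    exact omegaLast_update Ω Z Y q' w
  rw [e]
  have h1 : DifferentiableAt ℝ (fun q' =>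
      Ω q' (Function.update (Fin.cons (Z q') (fun j => Y j q')) (Fin.last (m + 1)) w)) q :=
    ((omegaNum_smooth hΩsm hZ hY w).differentiable (by simp)) q
  have h2 : DifferentiableAt ℝ (solvDelta Ω Z Y) q :=
    ((solvDelta_smooth hΩsm hZ hY).differentiable (by simp)) q
  have e2 : (fun q' =>
      Ω q' (Function.update (Fin.cons (Z q') (fun j => Y j q')) (Fin.last (m + 1)) w)
        / solvDelta Ω Z Y q')
      = fun q' =>
      (Ω q' (Function.update (Fin.cons (Z q') (fun j => Y j q')) (Fin.last (m + 1)) w))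
        * (solvDelta Ω Z Y q')⁻¹ := by
    funext q'
    rw [div_eq_mul_inv]
  rw [e2]
  exact h1.mul (h2.inv (solvDelta_ne_zero hΩ hframe q))

lemma omegaL_kill_span (hΩ : ∀ p, Ω p ≠ 0)
    (hframe : ∀ p, LinearIndependent ℝ (Fin.cons (Z p) (fun j => Y j p) :
      Fin (m + 2) → (Fin (m + 2) → ℝ)))
    (h : Fin (m + 1)) (p : Fin (m + 2) → ℝ) {x : Fin (m + 2) → ℝ}
    (hx : x ∈ Dspan Z Y h p) : omegaL Ω Z Y p x = 0 := by
  have hsub : (insert (Z p) ((fun j => Y j p) '' {j | j < h}))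
      ⊆ ↑(LinearMap.ker (omegaL Ω Z Y p)) := by
    intro x hx
    rcases hx with rfl | ⟨j, hj, rfl⟩
    · simpa [LinearMap.mem_ker, omegaL_apply] using omegaLast_Z Ω Z Y p
    · have hj2 : j < h := hj
      have hjne : j ≠ Fin.last m := by
        intro hj'
        rw [hj'] at hj2
        exact absurd hj2 (not_lt.mpr (Fin.le_last h))
      simpa [LinearMap.mem_ker, omegaL_apply] using omegaLast_Y_ne Ω Z Y p j hjne
  have := Submodule.span_le.mpr hsub hx
  simpa [LinearMap.mem_ker] using this

end Solv2

/-- Let `N` be an orientable `n`-dimensional manifold (`n = m+2`, modelled on `ℝⁿ`) with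
smooth volume form `Ω`, and let `{Y₁, ..., Y_{n-1}}` be a solvable structure for the
1-dimensional distribution spanned by the smooth vector field `Z`: the fields
`Z, Y₁, ..., Y_{n-1}` form a frame and `[Y_h, D_{h-1}] ⊆ D_{h-1}` for every `h`, where
`D_h = span(Z, Y₁, ..., Y_h)`.  Then the 1-form
`ω_{n-1} = (1/Δ) ι_{Y₁} ⋯ ι_{Y_{n-2}} ι_Z Ω`, with
`Δ = ι_{Y₁} ⋯ ι_{Y_{n-1}} ι_Z Ω`, is closed: `dω_{n-1} = 0`. -/
theorem stmt_3 {m : ℕ}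
    (Ω : (Fin (m + 2) → ℝ) → AlternatingMap ℝ (Fin (m + 2) → ℝ) ℝ (Fin (m + 2)))
    (Z : (Fin (m + 2) → ℝ) → (Fin (m + 2) → ℝ))
    (Y : Fin (m + 1) → (Fin (m + 2) → ℝ) → (Fin (m + 2) → ℝ))
    (hΩsm : ∀ V : Fin (m + 2) → (Fin (m + 2) → ℝ) → (Fin (m + 2) → ℝ),
      (∀ j, ContDiff ℝ (⊤ : ℕ∞) (V j)) → ContDiff ℝ (⊤ : ℕ∞) (fun p => Ω p (fun j => V j p)))
    (hΩ : ∀ p, Ω p ≠ 0)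
    (hZ : ContDiff ℝ (⊤ : ℕ∞) Z) (hY : ∀ j, ContDiff ℝ (⊤ : ℕ∞) (Y j))
    (hframe : ∀ p, LinearIndependent ℝ (Fin.cons (Z p) (fun j => Y j p) :
      Fin (m + 2) → (Fin (m + 2) → ℝ)))
    (hsolv : ∀ (h : Fin (m + 1)) (p : Fin (m + 2) → ℝ),
      vbracket (Y h) Z p ∈ Dspan Z Y h p ∧
      ∀ j : Fin (m + 1), j < h → vbracket (Y h) (Y j) p ∈ Dspan Z Y h p) :
    ∀ p v w, extDer (omegaLast Ω Z Y) p v w = 0 := by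
  intro p v w
  set ω := omegaLast Ω Z Y with hω
  have hΔ : ∀ q, solvDelta Ω Z Y q ≠ 0 := solvDelta_ne_zero hΩ hframe
  have hdiff : ∀ (w' q : Fin (m + 2) → ℝ), DifferentiableAt ℝ (fun q' => ω q' w') q :=
    fun w' q => omegaLast_diff hΩsm hΩ hZ hY hframe w' q
  have hLω : ∀ (q v' : Fin (m + 2) → ℝ), omegaL Ω Z Y q v' = ω q v' := fun _ _ => rfl
  set E := solvE Z Y with hE
  have hEsm : ∀ i, ContDiff ℝ (⊤ : ℕ∞) (E i) := solvE_smooth hZ hY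
  have hEdiff : ∀ i, Differentiable ℝ (E i) := fun i => (hEsm i).differentiable (by simp)
  -- `ω` applied to a frame field is a constant function
  have hconst : ∀ i : Fin (m + 2), ∃ c : ℝ, (fun q => ω q (E i q)) = fun _ => c := by
    intro i
    induction i using Fin.cases with
    | zero =>
      exact ⟨0, funext fun q => by simpa [hE, solvE, hω] using omegaLast_Z Ω Z Y q⟩
    | succ j =>
      by_cases hj : j = Fin.last m
      · subst hj
        exact ⟨1, funext fun q => by
          simpa [hE, solvE, hω] using omegaLast_Y_last Ω Z Y q (hΔ q)⟩
      · exact ⟨0, funext fun q => by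
          simpa [hE, solvE, hω] using omegaLast_Y_ne Ω Z Y q j hj⟩
  -- main differential identity on the frame fields
  have hkey : ∀ (j : Fin (m + 2)) (u : Fin (m + 2) → ℝ),
      fderiv ℝ (fun q => ω q (E j p)) p u = - ω p (fderiv ℝ (E j) p u) := by
    intro j u
    have h0 := fderiv_form_field ω (omegaL Ω Z Y) hLω hdiff (E j) (hEdiff j) p u
    obtain ⟨c, hc⟩ := hconst j
    rw [hc, fderiv_fun_const] at h0
    simp only [ContinuousLinearMap.zero_apply, Pi.zero_apply] at h0
    linarith
  -- the bracket of two frame fields is annihilated by ω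
  have hkill : ∀ (h : Fin (m + 1)) {x : Fin (m + 2) → ℝ}, x ∈ Dspan Z Y h p →
      omegaL Ω Z Y p x = 0 := fun h _ hx => omegaL_kill_span hΩ hframe h p hx
  have hbr : ∀ i j : Fin (m + 2), omegaL Ω Z Y p (vbracket (E i) (E j) p) = 0 := by
    have hEZ : E 0 = Z := rfl
    have hEY : ∀ h : Fin (m + 1), E h.succ = Y h := fun h => rfl
    have hneg : ∀ (X W : (Fin (m + 2) → ℝ) → (Fin (m + 2) → ℝ)),
        vbracket X W p = - vbracket W X p := by
      intro X W; simp [vbracket, neg_sub]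
    intro i j
    induction i using Fin.cases with
    | zero =>
      induction j using Fin.cases with
      | zero =>
        have : vbracket (E 0) (E 0) p = 0 := by simp [vbracket]
        rw [this, map_zero]
      | succ h =>
        rw [hEZ, hEY, hneg Z (Y h), map_neg, hkill h (hsolv h p).1, neg_zero]
    | succ h =>
      induction j using Fin.cases with
      | zero =>
        rw [hEZ, hEY]
        exact hkill h (hsolv h p).1
      | succ h' =>
        rw [hEY, hEY]
        rcases lt_trichotomy h' h with hlt | heq | hgt
        · exact hkill h ((hsolv h p).2 h' hlt)
        · rw [heq]
          have : vbracket (Y h) (Y h) p = 0 := by simp [vbracket]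
          rw [this, map_zero]
        · rw [hneg (Y h) (Y h'), map_neg, hkill h' ((hsolv h' p).2 h hgt), neg_zero]
  -- extDer vanishes on pairs of frame vectors
  have hpair : ∀ i j : Fin (m + 2), extDer ω p (E i p) (E j p) = 0 := by
    intro i j
    show fderiv ℝ (fun q => ω q (E j p)) p (E i p)
      - fderiv ℝ (fun q => ω q (E i p)) p (E j p) = 0
    rw [hkey j (E i p), hkey i (E j p)]
    have hsub := (omegaL Ω Z Y p).map_sub (fderiv ℝ (E j) p (E i p))
      (fderiv ℝ (E i) p (E j p))
    have hb := hbr i j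
    unfold vbracket at hb
    rw [hb] at hsub
    have e1 : omegaL Ω Z Y p (fderiv ℝ (E j) p (E i p)) = ω p (fderiv ℝ (E j) p (E i p)) :=
      rfl
    have e2 : omegaL Ω Z Y p (fderiv ℝ (E i) p (E j p)) = ω p (fderiv ℝ (E i) p (E j p)) :=
      rfl
    rw [e1, e2] at hsub
    linarith
  -- bilinearity of extDer at p
  have haddl : ∀ a b w' : Fin (m + 2) → ℝ,
      extDer ω p (a + b) w' = extDer ω p a w' + extDer ω p b w' := by
    intro a b w'
    show fderiv ℝ (fun q => ω q w') p (a + b) - fderiv ℝ (fun q => ω q (a + b)) p w'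
      = (fderiv ℝ (fun q => ω q w') p a - fderiv ℝ (fun q => ω q a) p w')
        + (fderiv ℝ (fun q => ω q w') p b - fderiv ℝ (fun q => ω q b) p w')
    have e : (fun q => ω q (a + b)) = fun q => ω q a + ω q b := by
      funext q
      rw [← hLω, map_add, hLω, hLω]
    rw [e, fderiv_fun_add (hdiff a p) (hdiff b p), (fderiv ℝ (fun q => ω q w') p).map_add]
    simp only [ContinuousLinearMap.add_apply]
    ring
  have hsmull : ∀ (c : ℝ) (a w' : Fin (m + 2) → ℝ),
      extDer ω p (c • a) w' = c * extDer ω p a w' := by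
    intro c a w'
    show fderiv ℝ (fun q => ω q w') p (c • a) - fderiv ℝ (fun q => ω q (c • a)) p w'
      = c * (fderiv ℝ (fun q => ω q w') p a - fderiv ℝ (fun q => ω q a) p w')
    have e : (fun q => ω q (c • a)) = fun q => c * ω q a := by
      funext q
      rw [← hLω, map_smul, hLω, smul_eq_mul]
    rw [e, fderiv_const_mul (hdiff a p), (fderiv ℝ (fun q => ω q w') p).map_smul]
    simp only [ContinuousLinearMap.smul_apply, smul_eq_mul]
    ring
  have haddr : ∀ v' a b : Fin (m + 2) → ℝ,
      extDer ω p v' (a + b) = extDer ω p v' a + extDer ω p v' b := by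
    intro v' a b
    show fderiv ℝ (fun q => ω q (a + b)) p v' - fderiv ℝ (fun q => ω q v') p (a + b)
      = (fderiv ℝ (fun q => ω q a) p v' - fderiv ℝ (fun q => ω q v') p a)
        + (fderiv ℝ (fun q => ω q b) p v' - fderiv ℝ (fun q => ω q v') p b)
    have e : (fun q => ω q (a + b)) = fun q => ω q a + ω q b := by
      funext q
      rw [← hLω, map_add, hLω, hLω]
    rw [e, fderiv_fun_add (hdiff a p) (hdiff b p), (fderiv ℝ (fun q => ω q v') p).map_add]
    simp only [ContinuousLinearMap.add_apply]
    ring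
  have hsmulr : ∀ (c : ℝ) (v' a : Fin (m + 2) → ℝ),
      extDer ω p v' (c • a) = c * extDer ω p v' a := by
    intro c v' a
    show fderiv ℝ (fun q => ω q (c • a)) p v' - fderiv ℝ (fun q => ω q v') p (c • a)
      = c * (fderiv ℝ (fun q => ω q a) p v' - fderiv ℝ (fun q => ω q v') p a)
    have e : (fun q => ω q (c • a)) = fun q => c * ω q a := by
      funext q
      rw [← hLω, map_smul, hLω, smul_eq_mul]
    rw [e, fderiv_const_mul (hdiff a p), (fderiv ℝ (fun q => ω q v') p).map_smul]
    simp only [ContinuousLinearMap.smul_apply, smul_eq_mul]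
    ring
  let B : (Fin (m + 2) → ℝ) →ₗ[ℝ] (Fin (m + 2) → ℝ) →ₗ[ℝ] ℝ :=
    LinearMap.mk₂ ℝ (fun v' w' => extDer ω p v' w') haddl hsmull haddr hsmulr
  -- basis from the frame
  have hcard : Fintype.card (Fin (m + 2)) = Module.finrank ℝ (Fin (m + 2) → ℝ) := by
    simp [Module.finrank_fin_fun]
  let b := basisOfLinearIndependentOfCardEqFinrank (hframe p) hcard
  have hbcoe : ⇑b = (Fin.cons (Z p) (fun j => Y j p) : Fin (m + 2) → (Fin (m + 2) → ℝ)) :=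
    coe_basisOfLinearIndependentOfCardEqFinrank _ _
  have hbE : ∀ i, b i = E i p := by
    intro i
    rw [hbcoe, ← solvE_at]
  have hpair' : ∀ i j, B (b i) (b j) = 0 := by
    intro i j
    rw [LinearMap.mk₂_apply, hbE i, hbE j]
    exact hpair i j
  obtain ⟨c, hv⟩ : ∃ c : Fin (m + 2) → ℝ, v = ∑ i, c i • b i :=
    ⟨fun i => b.repr v i, (b.sum_repr v).symm⟩
  obtain ⟨d, hw⟩ : ∃ d : Fin (m + 2) → ℝ, w = ∑ i, d i • b i :=
    ⟨fun i => b.repr w i, (b.sum_repr w).symm⟩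
  have : extDer ω p v w = B v w := rfl
  rw [this, hv, hw]
  simp only [map_sum, map_smul, LinearMap.sum_apply, LinearMap.smul_apply, hpair',
    smul_eq_mul, mul_zero, Finset.sum_const_zero]
end

section
/- For every C₁, C₂ ∈ ℝ, the function u(x) = cos(x - C₂) · √(C₁ - x·tan(x - C₂) - ln(cos(x - C₂))), defined on any open interval where cos(x - C₂) > 0 and the expression under the square root is positive, satisfies the second-order ODE u'' = -x²/(4u³) - u - 1/(2u). -/
/-! With `c = cos(x - C₂)` and `q` the radicand, one has `q' = -x / c²` because the `tan` terms
cancel. Hence `u = c √q` solves the first-order equation `u' = -tan(x - C₂) u - x / (2u)`, and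
differentiating this once more and using `1 / c² - tan² = 1` gives the second-order equation. -/

noncomputable def uEx2 (C₁ C₂ : ℝ) : ℝ → ℝ := fun x =>
  Real.cos (x - C₂) *
    Real.sqrt (C₁ - x * Real.tan (x - C₂) - Real.log (Real.cos (x - C₂)))

section

open Real Filter Topology

theorem hasDerivAt_radicand (C₁ C₂ : ℝ) {x : ℝ} (hc : cos (x - C₂) ≠ 0) :
    HasDerivAt (fun y => C₁ - y * tan (y - C₂) - log (cos (y - C₂)))
      (-x / cos (x - C₂) ^ 2) x := by
  have htan : HasDerivAt (fun y => tan (y - C₂)) (1 / cos (x - C₂) ^ 2) x :=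
    (hasDerivAt_tan hc).comp_sub_const x C₂
  have hlog : HasDerivAt (fun y => log (cos (y - C₂))) (-sin (x - C₂) / cos (x - C₂)) x :=
    ((hasDerivAt_cos (x - C₂)).comp_sub_const x C₂).log hc
  refine ((((hasDerivAt_id' x).mul htan).const_sub C₁).sub hlog).congr_deriv ?_
  rw [tan_eq_sin_div_cos]
  field_simp
  ring

theorem hasDerivAt_uEx2 (C₁ C₂ : ℝ) {x : ℝ} (hc : cos (x - C₂) ≠ 0)
    (hq : 0 < C₁ - x * tan (x - C₂) - log (cos (x - C₂))) :
    HasDerivAt (uEx2 C₁ C₂) (-tan (x - C₂) * uEx2 C₁ C₂ x - x / (2 * uEx2 C₁ C₂ x)) x := by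
  have hsqrt := (sqrt_pos.mpr hq).ne'
  refine (((hasDerivAt_cos (x - C₂)).comp_sub_const x C₂).mul
    ((hasDerivAt_radicand C₁ C₂ hc).sqrt hq.ne')).congr_deriv ?_
  simp only [uEx2, tan_eq_sin_div_cos]
  field_simp
  ring

theorem deriv_deriv_eq_of_eventually_hasDerivAt {u : ℝ → ℝ} {C x : ℝ}
    (hu : ∀ᶠ y in 𝓝 x, HasDerivAt u (-tan (y - C) * u y - y / (2 * u y)) y)
    (hc : cos (x - C) ≠ 0) (hux : u x ≠ 0) :
    deriv (deriv u) x = -x ^ 2 / (4 * u x ^ 3) - u x - 1 / (2 * u x) := by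
  have hderiv : deriv u =ᶠ[𝓝 x] fun y => -tan (y - C) * u y - y / (2 * u y) :=
    hu.mono fun y hy => hy.deriv
  have hu' := hu.self_of_nhds
  have htan : HasDerivAt (fun y => -tan (y - C)) (-(1 / cos (x - C) ^ 2)) x :=
    ((hasDerivAt_tan hc).comp_sub_const x C).neg
  have h : HasDerivAt (fun y => -tan (y - C) * u y - y / (2 * u y)) _ x :=
    (htan.mul hu').sub ((hasDerivAt_id' x).div (hu'.const_mul 2) (by positivity))
  rw [hderiv.deriv_eq, h.deriv]
  have hpyth := sin_sq_add_cos_sq (x - C)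
  simp only [tan_eq_sin_div_cos]
  field_simp
  linear_combination 16 * u x ^ 4 * hpyth

end

/-- For every `C₁, C₂ ∈ ℝ`, on any open set where `cos(x - C₂) > 0` and the expression
under the square root is positive, the function
`u(x) = cos(x - C₂)·√(C₁ - x·tan(x - C₂) - ln(cos(x - C₂)))` satisfies the ODE
`u'' = -x²/(4u³) - u - 1/(2u)`. -/
theorem stmt_8 (C₁ C₂ : ℝ) (s : Set ℝ) (hs : IsOpen s)
    (hcos : ∀ x ∈ s, Real.cos (x - C₂) > 0)
    (hpos : ∀ x ∈ s,
      C₁ - x * Real.tan (x - C₂) - Real.log (Real.cos (x - C₂)) > 0) :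
    ∀ x ∈ s, deriv (deriv (uEx2 C₁ C₂)) x =
      -x ^ 2 / (4 * (uEx2 C₁ C₂ x) ^ 3) - uEx2 C₁ C₂ x - 1 / (2 * uEx2 C₁ C₂ x) := by
  intro x hx
  have hfirst : ∀ᶠ y in nhds x, HasDerivAt (uEx2 C₁ C₂)
      (-Real.tan (y - C₂) * uEx2 C₁ C₂ y - y / (2 * uEx2 C₁ C₂ y)) y := by
    filter_upwards [hs.mem_nhds hx] with y hy
    exact hasDerivAt_uEx2 C₁ C₂ (hcos y hy).ne' (hpos y hy)
  exact deriv_deriv_eq_of_eventually_hasDerivAt hfirst (hcos x hx).ne'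
    (mul_pos (hcos x hx) (Real.sqrt_pos.mpr (hpos x hx))).ne'
end

section
/- The functions I₂ = 2 ln u - w - ln(4u²u₁² + 4xuu₁ + 4u⁴ + x²) and I₃ = arctan((u²u₁ + xu/2)/u³) + x are first integrals of the vector field Y₀ = ∂_x + u₁∂_u + (-x²/(4u³) - u - 1/(2u))∂_{u₁} + (x/u²)∂_w on the region of ℝ⁴ (coordinates x, u, u₁, w) where u > 0; that is, Y₀(I₂) = 0 and Y₀(I₃) = 0. -/
/-! The quadric `Q = 4u²u₁² + 4xuu₁ + 4u⁴ + x² = (2uu₁ + x)² + 4u⁴` is a Darboux function of `Y₀`: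
`Y₀ Q = (2u₁/u - x/u²) Q`, and the cofactor is `Y₀ (2 ln u - w)`, so `Y₀ I₂ = 0`.
The argument `R = u₁/u + x/(2u²)` of the arctangent in `I₃` solves the Riccati equation
`Y₀ R = -(1 + R²)`, so `Y₀ (arctan R) = -1 = -Y₀ x`. -/

namespace Ex2

/-- The vector field `Y₀ = ∂_x + u₁∂_u + (-x²/(4u³) - u - 1/(2u))∂_{u₁} + (x/u²)∂_w`
on coordinates `p = (x, u, u₁, w)`. -/
noncomputable def Y₀ (p : Fin 4 → ℝ) : Fin 4 → ℝ :=
  ![1, p 2, -(p 0) ^ 2 / (4 * (p 1) ^ 3) - p 1 - 1 / (2 * p 1), p 0 / (p 1) ^ 2]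

/-- `I₂ = 2 ln u - w - ln(4u²u₁² + 4xuu₁ + 4u⁴ + x²)`. -/
noncomputable def I₂ (p : Fin 4 → ℝ) : ℝ :=
  2 * Real.log (p 1) - p 3 -
    Real.log (4 * (p 1) ^ 2 * (p 2) ^ 2 + 4 * p 0 * p 1 * p 2 + 4 * (p 1) ^ 4 + (p 0) ^ 2)

/-- `I₃ = arctan((u²u₁ + xu/2)/u³) + x`. -/
noncomputable def I₃ (p : Fin 4 → ℝ) : ℝ :=
  Real.arctan (((p 1) ^ 2 * p 2 + p 0 * p 1 / 2) / (p 1) ^ 3) + p 0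

end Ex2

namespace Ex2

variable {p : Fin 4 → ℝ}

noncomputable def quadric (p : Fin 4 → ℝ) : ℝ :=
  4 * (p 1) ^ 2 * (p 2) ^ 2 + 4 * p 0 * p 1 * p 2 + 4 * (p 1) ^ 4 + (p 0) ^ 2

noncomputable def ratio (p : Fin 4 → ℝ) : ℝ :=
  ((p 1) ^ 2 * p 2 + p 0 * p 1 / 2) / (p 1) ^ 3

theorem quadric_eq_sq_add (p : Fin 4 → ℝ) :
    quadric p = (2 * p 1 * p 2 + p 0) ^ 2 + 4 * p 1 ^ 4 := by
  unfold quadric; ring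

theorem quadric_pos (hu : p 1 ≠ 0) : 0 < quadric p := by
  rw [quadric_eq_sq_add]; positivity

theorem differentiableAt_quadric (p : Fin 4 → ℝ) : DifferentiableAt ℝ quadric p := by
  unfold quadric; fun_prop

theorem differentiableAt_ratio (hu : p 1 ≠ 0) : DifferentiableAt ℝ ratio p := by
  unfold ratio; fun_prop (disch := positivity)

theorem fderiv_quadric_apply (p v : Fin 4 → ℝ) :
    fderiv ℝ quadric p v = 8 * p 1 * p 2 ^ 2 * v 1 + 8 * p 1 ^ 2 * p 2 * v 2
      + 4 * (p 1 * p 2 * v 0 + p 0 * p 2 * v 1 + p 0 * p 1 * v 2) + 16 * p 1 ^ 3 * v 1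
      + 2 * p 0 * v 0 := by
  have h (i : Fin 4) := hasFDerivAt_apply (𝕜 := ℝ) i p
  have hQ : HasFDerivAt quadric _ p :=
    (((((h 1).pow 2).const_mul 4).mul ((h 2).pow 2)).add
      ((((h 0).const_mul 4).mul (h 1)).mul (h 2))).add (((h 1).pow 4).const_mul 4) |>.add
      ((h 0).pow 2)
  rw [hQ.fderiv]
  simp only [Pi.mul_apply, Nat.add_one_sub_one, pow_one, nsmul_eq_mul, Nat.cast_ofNat, smul_add,
    add_apply, smul_apply, ContinuousLinearMap.proj_apply, smul_eq_mul]
  ring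

theorem fderiv_ratio_apply (hu : p 1 ≠ 0) (v : Fin 4 → ℝ) :
    fderiv ℝ ratio p v = v 2 / p 1 - p 2 * v 1 / p 1 ^ 2 + v 0 / (2 * p 1 ^ 2)
      - p 0 * v 1 / p 1 ^ 3 := by
  have h (i : Fin 4) := hasFDerivAt_apply (𝕜 := ℝ) i p
  have hR : HasFDerivAt ratio _ p :=
    ((((h 1).pow 2).mul (h 2)).add (((h 0).mul (h 1)).mul_const 2⁻¹)).mul
      ((hasDerivAt_inv (pow_ne_zero 3 hu)).comp_hasFDerivAt p ((h 1).pow 3))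
  rw [hR.fderiv]
  simp only [Pi.mul_apply, Pi.add_apply, Nat.add_one_sub_one, nsmul_eq_mul, Nat.cast_ofNat,
    neg_smul, smul_neg, pow_one, smul_add, add_apply, neg_apply, smul_apply,
    ContinuousLinearMap.proj_apply, smul_eq_mul]
  field_simp
  ring

theorem fderiv_quadric_Y₀ (hu : p 1 ≠ 0) :
    fderiv ℝ quadric p (Y₀ p) = (2 * p 2 / p 1 - p 0 / p 1 ^ 2) * quadric p := by
  simp only [fderiv_quadric_apply, Y₀, quadric, Matrix.cons_val_zero, Matrix.cons_val_one,
    Matrix.cons_val]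
  field_simp
  ring

theorem fderiv_ratio_Y₀ (hu : p 1 ≠ 0) :
    fderiv ℝ ratio p (Y₀ p) = -(1 + ratio p ^ 2) := by
  simp only [fderiv_ratio_apply hu, Y₀, ratio, Matrix.cons_val_zero, Matrix.cons_val_one,
    Matrix.cons_val]
  field_simp
  ring

theorem fderiv_I₂_apply (hu : p 1 ≠ 0) (v : Fin 4 → ℝ) :
    fderiv ℝ I₂ p v = 2 * v 1 / p 1 - v 3 - fderiv ℝ quadric p v / quadric p := by
  have h (i : Fin 4) := hasFDerivAt_apply (𝕜 := ℝ) i p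
  have hI : HasFDerivAt I₂ _ p := (((h 1).log hu).const_mul 2).sub (h 3) |>.sub
    ((differentiableAt_quadric p).hasFDerivAt.log (quadric_pos hu).ne')
  rw [hI.fderiv]
  simp only [sub_apply, smul_apply, ContinuousLinearMap.proj_apply, smul_eq_mul]
  ring

theorem fderiv_I₃_apply (hu : p 1 ≠ 0) (v : Fin 4 → ℝ) :
    fderiv ℝ I₃ p v = fderiv ℝ ratio p v / (1 + ratio p ^ 2) + v 0 := by
  have hI : HasFDerivAt I₃ _ p :=
    (differentiableAt_ratio hu).hasFDerivAt.arctan.add (hasFDerivAt_apply (𝕜 := ℝ) 0 p)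
  rw [hI.fderiv]
  simp only [one_div, add_apply, smul_apply, smul_eq_mul, ContinuousLinearMap.proj_apply]
  ring

end Ex2

open Ex2 in
/-- `I₂` and `I₃` are first integrals of
`Y₀ = ∂_x + u₁∂_u + (-x²/(4u³) - u - 1/(2u))∂_{u₁} + (x/u²)∂_w` on the region `u > 0`:
`Y₀(I₂) = 0` and `Y₀(I₃) = 0`. -/
theorem stmt_9 (p : Fin 4 → ℝ) (hu : p 1 > 0) :
    fderiv ℝ I₂ p (Y₀ p) = 0 ∧ fderiv ℝ I₃ p (Y₀ p) = 0 := by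
  have hu₀ : p 1 ≠ 0 := hu.ne'
  constructor
  · rw [fderiv_I₂_apply hu₀, fderiv_quadric_Y₀ hu₀, mul_div_cancel_right₀ _ (quadric_pos hu₀).ne']
    simp [Y₀]
  · rw [fderiv_I₃_apply hu₀, fderiv_ratio_Y₀ hu₀, neg_div, div_self (by positivity)]
    simp [Y₀]
end

section
/- For every C ∈ ℝ, the function u(x) = 1/(C e^x + ln(∫ -x e^{-C e^x} dx)), defined on an interval where the denominator is positive and the integral is positive, satisfies the second-order ODE u'' = (x u' - x u² + u²) e^{-1/u} + 2(u')²/u + u'. -/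
/-!
With `g = C eˣ + ln F` we have `u = 1/g`, and `F' = -x e^{-C eˣ}` turns into the first-order
equation `g' = C eˣ - x e^{-g}`. Differentiating it once more gives
`g'' = g' + (x g' + x - 1) e^{-g}`, which is exactly the stated ODE after substituting
`u = 1/g`, `u' = -g'/g²`, `u'' = 2g'²/g³ - g''/g²` and `e^{-1/u} = e^{-g}`.
-/

open Real

/-- `u(x) = 1/(C e^x + ln F(x))` where `F` is an antiderivative of `-x e^{-C e^x}`. -/
noncomputable def uEx4 (C : ℝ) (F : ℝ → ℝ) : ℝ → ℝ := fun x =>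
  1 / (C * Real.exp x + Real.log (F x))

section Reciprocal

variable {g g' g'' : ℝ → ℝ} {s : Set ℝ}

theorem eqOn_deriv_inv (hg : ∀ x ∈ s, HasDerivAt g (g' x) x)
    (h0 : ∀ x ∈ s, g x ≠ 0) :
    Set.EqOn (deriv fun y => (g y)⁻¹) (fun y => -g' y / g y ^ 2) s := fun x hx =>
  ((hg x hx).inv (h0 x hx)).deriv

theorem deriv_deriv_inv (hs : IsOpen s) (hg : ∀ x ∈ s, HasDerivAt g (g' x) x)
    (hg' : ∀ x ∈ s, HasDerivAt g' (g'' x) x) (h0 : ∀ x ∈ s, g x ≠ 0) {x : ℝ} (hx : x ∈ s) :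
    deriv (deriv fun y => (g y)⁻¹) x = 2 * g' x ^ 2 / g x ^ 3 - g'' x / g x ^ 2 := by
  have hloc : (deriv fun y => (g y)⁻¹) =ᶠ[nhds x] fun y => -g' y / g y ^ 2 :=
    Filter.eventuallyEq_of_mem (hs.mem_nhds hx) (eqOn_deriv_inv hg h0)
  have hquot : HasDerivAt (fun y => -g' y / g y ^ 2)
      ((-g'' x * g x ^ 2 - -g' x * ((2 : ℕ) * g x ^ 1 * g' x)) / (g x ^ 2) ^ 2) x :=
    (hg' x hx).neg.fun_div ((hg x hx).pow 2) (pow_ne_zero 2 (h0 x hx))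
  rw [hloc.deriv_eq, hquot.deriv]
  field_simp [h0 x hx]
  ring

end Reciprocal

theorem hasDerivAt_const_mul_exp_add_log {C : ℝ} {F : ℝ → ℝ} {x : ℝ}
    (hF : HasDerivAt F (-x * exp (-C * exp x)) x) (hFpos : 0 < F x) :
    HasDerivAt (fun y => C * exp y + log (F y))
      (C * exp x - x * exp (-(C * exp x + log (F x)))) x := by
  refine ((hasDerivAt_exp x).const_mul C |>.add (hF.log hFpos.ne')).congr_deriv ?_
  rw [neg_add, ← neg_mul, exp_add, exp_neg (log _), exp_log hFpos]
  ring

theorem hasDerivAt_const_mul_exp_sub_mul_exp_neg {C g' x : ℝ} {g : ℝ → ℝ}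
    (hg : HasDerivAt g g' x) :
    HasDerivAt (fun y => C * exp y - y * exp (-g y))
      (C * exp x - exp (-g x) + x * g' * exp (-g x)) x := by
  refine ((hasDerivAt_exp x).const_mul C |>.sub ((hasDerivAt_id x).mul hg.neg.exp)).congr_deriv ?_
  simp only [id, Pi.neg_apply]
  ring

theorem inv_solves_ode_of_hasDerivAt {C : ℝ} {g u : ℝ → ℝ} {s : Set ℝ} (hs : IsOpen s)
    (hg : ∀ x ∈ s, HasDerivAt g (C * exp x - x * exp (-g x)) x) (h0 : ∀ x ∈ s, g x ≠ 0)
    (hu : u = fun y => (g y)⁻¹) {x : ℝ} (hx : x ∈ s) :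
    deriv (deriv u) x =
      (x * deriv u x - x * u x ^ 2 + u x ^ 2) * exp (-1 / u x) +
        2 * deriv u x ^ 2 / u x + deriv u x := by
  subst hu
  have hg' : ∀ x ∈ s, HasDerivAt (fun y => C * exp y - y * exp (-g y))
      (C * exp x - exp (-g x) + x * (C * exp x - x * exp (-g x)) * exp (-g x)) x :=
    fun x hx => hasDerivAt_const_mul_exp_sub_mul_exp_neg (hg x hx)
  have hexp : exp (-1 / (g x)⁻¹) = exp (-g x) := by rw [div_inv_eq_mul, neg_one_mul]
  rw [deriv_deriv_inv hs hg hg' h0 hx, eqOn_deriv_inv hg h0 hx, hexp]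
  field_simp [h0 x hx]
  ring

/-- For every `C ∈ ℝ`, the function `u(x) = 1/(C e^x + ln(∫ -x e^{-C e^x} dx))`,
on an open set where the antiderivative `F` is positive and the denominator
`C e^x + ln F` is positive, satisfies the ODE
`u'' = (x u' - x u² + u²) e^{-1/u} + 2(u')²/u + u'`. -/
theorem stmt_12 (C : ℝ) (F : ℝ → ℝ) (s : Set ℝ) (hs : IsOpen s)
    (hF : ∀ x ∈ s, HasDerivAt F (-x * Real.exp (-C * Real.exp x)) x)
    (hFpos : ∀ x ∈ s, F x > 0)
    (hden : ∀ x ∈ s, C * Real.exp x + Real.log (F x) > 0) :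
    ∀ x ∈ s, deriv (deriv (uEx4 C F)) x =
      (x * deriv (uEx4 C F) x - x * (uEx4 C F x) ^ 2 + (uEx4 C F x) ^ 2) *
          Real.exp (-1 / uEx4 C F x) +
        2 * (deriv (uEx4 C F) x) ^ 2 / uEx4 C F x + deriv (uEx4 C F) x := fun _ hx =>
  inv_solves_ode_of_hasDerivAt hs (fun y hy => hasDerivAt_const_mul_exp_add_log (hF y hy) (hFpos y hy))
    (fun y hy => (hden y hy).ne') (funext fun _ => one_div _) hx
end

section
/- For every C ∈ ℝ, the function u(x) = -x²/(C + x⁵/20 + x·ln(∫ -x e^{-(C/x + x⁴/20)} dx)), on any interval where it is defined, satisfies the second-order ODE u'' = 2(u')²/u + (x e^{x/u} - 4/x) u' - (3u²/x + u) e^{x/u} + x u² + 2u/x². -/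
/-!
Put `w = x / u = -(C/x + x⁴/20) - ln F`. Then `e^w = -F'/(x F)`, so `w' = C/x² - x³/5 + x e^w`;
differentiating once more and eliminating `C` gives `w'' = -2w'/x + (3 + x w') e^w - x²`.
Under `u = x / w` this equation for `w` is a rational rewriting of the stated ODE for `u`.
-/

/-- `u(x) = -x²/(C + x⁵/20 + x·ln F(x))` where `F` is an antiderivative of
`-x e^{-(C/x + x⁴/20)}`. -/
noncomputable def uEx5 (C : ℝ) (F : ℝ → ℝ) : ℝ → ℝ := fun x =>
  -x ^ 2 / (C + x ^ 5 / 20 + x * Real.log (F x))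

open Filter Topology Real

noncomputable def wEx5 (C : ℝ) (F : ℝ → ℝ) (y : ℝ) : ℝ :=
  -(C / y + y ^ 4 / 20) - log (F y)

noncomputable def wEx5Deriv (C : ℝ) (F : ℝ → ℝ) (y : ℝ) : ℝ :=
  C / y ^ 2 - y ^ 3 / 5 + y * exp (wEx5 C F y)

section
variable {C : ℝ} {F : ℝ → ℝ} {y : ℝ}

theorem wEx5_eq (hy : y ≠ 0) :
    wEx5 C F y = -(C + y ^ 5 / 20 + y * log (F y)) / y := by
  rw [wEx5]
  field_simp
  ring

theorem uEx5_eq_div_wEx5 (hy : y ≠ 0) : uEx5 C F y = y / wEx5 C F y := by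
  rw [wEx5_eq hy, uEx5, div_div_eq_mul_div, neg_div, div_neg, ← sq]

theorem exp_wEx5 (hFy : 0 < F y) : exp (wEx5 C F y) = exp (-(C / y + y ^ 4 / 20)) / F y := by
  rw [wEx5, exp_sub, exp_log hFy]

variable (hF : HasDerivAt F (-y * exp (-(C / y + y ^ 4 / 20))) y) (hy : y ≠ 0) (hFy : 0 < F y)
include hF hy hFy

theorem hasDerivAt_wEx5 : HasDerivAt (wEx5 C F) (wEx5Deriv C F y) y := by
  refine ((((hasDerivAt_const y C).div (hasDerivAt_id' y) hy).add
    ((hasDerivAt_pow 4 y).div_const 20)).neg.sub (hF.log hFy.ne')).congr_deriv ?_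
  rw [wEx5Deriv, exp_wEx5 hFy]
  field_simp
  ring

theorem hasDerivAt_wEx5Deriv :
    HasDerivAt (wEx5Deriv C F)
      (-2 * wEx5Deriv C F y / y + (3 + y * wEx5Deriv C F y) * exp (wEx5 C F y) - y ^ 2) y := by
  refine ((((hasDerivAt_const y C).div (hasDerivAt_pow 2 y) (pow_ne_zero 2 hy)).sub
    ((hasDerivAt_pow 3 y).div_const 5)).add
      ((hasDerivAt_id' y).mul (hasDerivAt_wEx5 hF hy hFy).exp)).congr_deriv ?_
  rw [wEx5Deriv]
  field_simp
  ring

end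

section
variable {u w w' : ℝ → ℝ} {x : ℝ}

theorem deriv_deriv_eq_of_eq_id_div (hu : ∀ᶠ y in 𝓝 x, u y = y / w y)
    (hw : ∀ᶠ y in 𝓝 x, HasDerivAt w (w' y) y)
    (hw' : HasDerivAt w' (-2 * w' x / x + (3 + x * w' x) * exp (w x) - x ^ 2) x)
    (hx : x ≠ 0) (hwx : w x ≠ 0) :
    deriv (deriv u) x =
      2 * (deriv u x) ^ 2 / u x +
        (x * exp (x / u x) - 4 / x) * deriv u x -
        (3 * (u x) ^ 2 / x + u x) * exp (x / u x) +
        x * (u x) ^ 2 + 2 * u x / x ^ 2 := by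
  have hwx' := hw.self_of_nhds
  have hw0 : ∀ᶠ y in 𝓝 x, w y ≠ 0 := hwx'.continuousAt.eventually_ne hwx
  have hu' : ∀ᶠ y in 𝓝 x, HasDerivAt u ((w y - y * w' y) / w y ^ 2) y := by
    filter_upwards [hu.eventually_nhds, hw, hw0] with y huy hwy hwy0
    exact (((hasDerivAt_id' y).div hwy hwy0).congr_deriv (by rw [one_mul])).congr_of_eventuallyEq
      huy
  have hu'' := (hwx'.fun_sub ((hasDerivAt_id' x).fun_mul hw')).fun_div (hwx'.fun_pow 2)
    (pow_ne_zero 2 hwx)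
  have hderiv : deriv u =ᶠ[𝓝 x] fun y => (w y - y * w' y) / w y ^ 2 :=
    hu'.mono fun y hy => hy.deriv
  rw [hderiv.deriv_eq, hu''.deriv, hu'.self_of_nhds.deriv, hu.self_of_nhds, div_div_cancel₀ hx]
  field_simp
  ring

end

/-- For every `C ∈ ℝ`, the function
`u(x) = -x²/(C + x⁵/20 + x·ln(∫ -x e^{-(C/x + x⁴/20)} dx))`, on an open set where
`x > 0`, the antiderivative `F` is positive and the denominator is nonzero, satisfies
the ODE `u'' = 2(u')²/u + (x e^{x/u} - 4/x) u' - (3u²/x + u) e^{x/u} + x u² + 2u/x²`. -/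
theorem stmt_13 (C : ℝ) (F : ℝ → ℝ) (s : Set ℝ) (hs : IsOpen s)
    (hF : ∀ x ∈ s, HasDerivAt F (-x * Real.exp (-(C / x + x ^ 4 / 20))) x)
    (hx : ∀ x ∈ s, x > 0)
    (hFpos : ∀ x ∈ s, F x > 0)
    (hden : ∀ x ∈ s, C + x ^ 5 / 20 + x * Real.log (F x) ≠ 0) :
    ∀ x ∈ s, deriv (deriv (uEx5 C F)) x =
      2 * (deriv (uEx5 C F) x) ^ 2 / uEx5 C F x +
        (x * Real.exp (x / uEx5 C F x) - 4 / x) * deriv (uEx5 C F) x -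
        (3 * (uEx5 C F x) ^ 2 / x + uEx5 C F x) * Real.exp (x / uEx5 C F x) +
        x * (uEx5 C F x) ^ 2 + 2 * uEx5 C F x / x ^ 2 := by
  intro x hxs
  have hs_nhds : s ∈ 𝓝 x := hs.mem_nhds hxs
  have hx0 : x ≠ 0 := (hx x hxs).ne'
  refine deriv_deriv_eq_of_eq_id_div (w := wEx5 C F) (w' := wEx5Deriv C F) ?_ ?_
    (hasDerivAt_wEx5Deriv (hF x hxs) hx0 (hFpos x hxs)) hx0 ?_
  · filter_upwards [hs_nhds] with y hy using uEx5_eq_div_wEx5 (hx y hy).ne'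
  · filter_upwards [hs_nhds] with y hy using hasDerivAt_wEx5 (hF y hy) (hx y hy).ne' (hFpos y hy)
  · rw [wEx5_eq hx0]
    exact div_ne_zero (neg_ne_zero.mpr (hden x hxs)) hx0
end

section
/- Let g = span(Y₁,...,Y_r) be a Lie algebra of evolutionary symmetries of the k-th order ODE E: u_k = f(x,u,u₁,...,u_{k-1}), with restricted total derivative D̄_x = ∂_x + u₁∂_u + ... + f∂_{u_{k-1}}, and let H be a smooth function on E × ℝ (coordinate w on ℝ). Then every X ∈ g, extended to E × ℝ by its natural prolongation with ∂_w-component determined by the covering, is tangent to the covering system E' = {u_k = f, w₁ = H} if and only if X(H) = 0 for all X ∈ g; moreover if additionally ∂H/∂w = 0 then ∂_w is a symmetry of the covering vector field D̃_x = D̄_x + H∂_w commuting with all elements of g. -/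
namespace Covering

/-- The restricted total derivative `D̄_x = ∂_x + u₁∂_u + ... + f∂_{u_{k-1}}` of the
`k`-th order ODE `u_k = f`, on the equation manifold with coordinates
`(x, u, u₁, ..., u_{k-1})` (coordinate `0` is `x`, coordinate `j+1` is `u_j`). -/
noncomputable def Dbar {k : ℕ} (f : (Fin (k + 1) → ℝ) → ℝ)
    (p : Fin (k + 1) → ℝ) : Fin (k + 1) → ℝ :=
  fun i => if (i : ℕ) = 0 then 1 else if (i : ℕ) < k then p (i + 1) else f p

/-- The extension of a vector field `X` on the equation manifold to the covering
manifold `E × ℝ` (extra coordinate `w`), with zero `∂_w`-component. -/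
noncomputable def extE {k : ℕ} (X : (Fin (k + 1) → ℝ) → (Fin (k + 1) → ℝ)) :
    (Fin (k + 2) → ℝ) → (Fin (k + 2) → ℝ) :=
  fun q => Fin.snoc (X (Fin.init q)) 0

/-- The covering vector field `D̃_x = D̄_x + H∂_w` on `E × ℝ`. -/
noncomputable def Dtilde {k : ℕ} (f : (Fin (k + 1) → ℝ) → ℝ)
    (H : (Fin (k + 2) → ℝ) → ℝ) (q : Fin (k + 2) → ℝ) : Fin (k + 2) → ℝ :=
  Fin.snoc (Dbar f (Fin.init q)) (H q)

/-- The vector field `∂_w` on `E × ℝ`. -/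
noncomputable def Wfield {k : ℕ} : (Fin (k + 2) → ℝ) → (Fin (k + 2) → ℝ) :=
  fun _ => Pi.single (Fin.last (k + 1)) 1

end Covering

section helpers

open Covering

/-- `Fin.init` as a continuous linear map. -/
noncomputable def initCLM (k : ℕ) : (Fin (k+2) → ℝ) →L[ℝ] (Fin (k+1) → ℝ) :=
  ContinuousLinearMap.pi (fun j => ContinuousLinearMap.proj (Fin.castSucc j))

lemma diff_comp_init {k : ℕ} {E : Type*} [NormedAddCommGroup E] [NormedSpace ℝ E]
    {g : (Fin (k+1) → ℝ) → E} (hg : Differentiable ℝ g) :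
    Differentiable ℝ (fun q : Fin (k+2) → ℝ => g (Fin.init q)) :=
  hg.comp (initCLM k).differentiable

lemma fderiv_comp_init {k : ℕ} {E : Type*} [NormedAddCommGroup E] [NormedSpace ℝ E]
    {g : (Fin (k+1) → ℝ) → E} (q v : Fin (k+2) → ℝ)
    (hg : DifferentiableAt ℝ g (Fin.init q)) :
    fderiv ℝ (fun q => g (Fin.init q)) q v = fderiv ℝ g (Fin.init q) (Fin.init v) := by
  have h1 : (fun q : Fin (k+2) → ℝ => g (Fin.init q)) = g ∘ (initCLM k) := rfl
  have hg' : DifferentiableAt ℝ g ((initCLM k) q) := hg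
  rw [h1, fderiv_comp q hg' ((initCLM k).differentiableAt), (initCLM k).fderiv]
  rfl

lemma fderiv_apply_comp {n m : ℕ} {F : (Fin n → ℝ) → (Fin m → ℝ)} {x : Fin n → ℝ}
    (hF : ∀ i, DifferentiableAt ℝ (fun x => F x i) x) (v : Fin n → ℝ) (i : Fin m) :
    fderiv ℝ F x v i = fderiv ℝ (fun x => F x i) x v := by
  have h : fderiv ℝ (fun x (i : Fin m) => F x i) x
      = ContinuousLinearMap.pi fun i => fderiv ℝ (fun x => F x i) x := fderiv_pi hF
  calc fderiv ℝ F x v i = fderiv ℝ (fun x (i : Fin m) => F x i) x v i := rfl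
  _ = _ := by rw [h]; rfl

lemma Dbar_comp_diff {k : ℕ} (f : (Fin (k + 1) → ℝ) → ℝ) (hf : ContDiff ℝ (⊤ : ℕ∞) f)
    (j : Fin (k+1)) : Differentiable ℝ (fun p => Dbar f p j) := by
  rcases eq_or_ne (j:ℕ) 0 with h0 | h0
  · have h : (fun p : Fin (k+1) → ℝ => Dbar f p j) = fun _ => 1 := by
      funext p; simp [Dbar, h0]
    rw [h]; exact differentiable_const _
  · rcases lt_or_ge (j:ℕ) k with h1 | h1
    · have h : (fun p : Fin (k+1) → ℝ => Dbar f p j) = fun p => p (j+1) := by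
        funext p; simp [Dbar, h0, h1]
      rw [h]; exact differentiable_apply _
    · have h : (fun p : Fin (k+1) → ℝ => Dbar f p j) = f := by
        funext p; simp [Dbar, h0, Nat.not_lt.mpr h1]
      rw [h]; exact hf.differentiable (by simp)

lemma Dtilde_comp_castSucc {k : ℕ} (f : (Fin (k + 1) → ℝ) → ℝ)
    (H : (Fin (k + 2) → ℝ) → ℝ) (j : Fin (k+1)) :
    (fun q : Fin (k+2) → ℝ => Dtilde f H q (Fin.castSucc j))
      = (fun q => Dbar f (Fin.init q) j) := by
  funext q; simp [Dtilde]

lemma Dtilde_comp_last {k : ℕ} (f : (Fin (k + 1) → ℝ) → ℝ)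
    (H : (Fin (k + 2) → ℝ) → ℝ) :
    (fun q : Fin (k+2) → ℝ => Dtilde f H q (Fin.last (k+1))) = H := by
  funext q; simp [Dtilde]

lemma extE_comp_castSucc {k : ℕ} (X : (Fin (k + 1) → ℝ) → (Fin (k + 1) → ℝ))
    (j : Fin (k+1)) :
    (fun q : Fin (k+2) → ℝ => extE X q (Fin.castSucc j))
      = (fun q => X (Fin.init q) j) := by
  funext q; simp [extE]

lemma extE_comp_last {k : ℕ} (X : (Fin (k + 1) → ℝ) → (Fin (k + 1) → ℝ)) :
    (fun q : Fin (k+2) → ℝ => extE X q (Fin.last (k+1))) = fun _ => (0:ℝ) := by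
  funext q; simp [extE]

lemma init_single_last {k : ℕ} :
    Fin.init (Pi.single (Fin.last (k+1)) (1:ℝ) : Fin (k+2) → ℝ) = 0 := by
  funext j
  simp only [Fin.init]
  rw [Pi.single_eq_of_ne (Fin.castSucc_lt_last j).ne]
  rfl

end helpers

open Covering in
/-- Let `g = span(Y₁, ..., Y_r)` be a Lie algebra of evolutionary symmetries of the
`k`-th order ODE `u_k = f` (each `Y_i` has zero `∂_x`-component and commutes with the
restricted total derivative `D̄_x`), and let `H` be a smooth function on `E × ℝ`.  Then
every `Y_i`, extended to `E × ℝ`, is tangent to the covering system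
`E' = {u_k = f, w₁ = H}` (i.e. is a symmetry of the covering vector field
`D̃_x = D̄_x + H∂_w`) for all `i` if and only if `Y_i(H) = 0` for all `i`; moreover, if
additionally `∂H/∂w = 0`, then `∂_w` is a symmetry of `D̃_x` commuting with `D̃_x` and
with all elements of `g`. -/
theorem stmt_17 {k r : ℕ} (f : (Fin (k + 1) → ℝ) → ℝ) (hf : ContDiff ℝ (⊤ : ℕ∞) f)
    (Y : Fin r → (Fin (k + 1) → ℝ) → (Fin (k + 1) → ℝ))
    (hYsm : ∀ i, ContDiff ℝ (⊤ : ℕ∞) (Y i))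
    (hYev : ∀ i p, Y i p 0 = 0)
    (hYsym : ∀ i p, vbracket (Y i) (Dbar f) p = 0)
    (hclosed : ∀ i j p, vbracket (Y i) (Y j) p ∈
      Submodule.span ℝ (Set.range fun l => Y l p))
    (H : (Fin (k + 2) → ℝ) → ℝ) (hH : ContDiff ℝ (⊤ : ℕ∞) H) :
    ((∀ i q, vbracket (extE (Y i)) (Dtilde f H) q ∈
        Submodule.span ℝ {Dtilde f H q}) ↔
      (∀ i q, fderiv ℝ H q (extE (Y i) q) = 0)) ∧
    ((∀ q, fderiv ℝ H q (Pi.single (Fin.last (k + 1)) 1) = 0) →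
      (∀ q, vbracket (Wfield (k := k)) (Dtilde f H) q = 0) ∧
      (∀ i q, vbracket (Wfield (k := k)) (extE (Y i)) q = 0)) := by
  have hHd : Differentiable ℝ H := hH.differentiable (by simp)
  have hDbarj : ∀ j, Differentiable ℝ (fun p => Dbar f p j) := Dbar_comp_diff f hf
  have hYd : ∀ i, Differentiable ℝ (Y i) := fun i => (hYsm i).differentiable (by simp)
  have hYj : ∀ i j, Differentiable ℝ (fun p => Y i p j) := fun i =>
    differentiable_pi.1 (hYd i)
  -- differentiability of the components of `Dtilde`
  have hDtj : ∀ (j : Fin (k+2)), Differentiable ℝ (fun q => Dtilde f H q j) := by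
    intro j
    refine Fin.lastCases ?_ ?_ j
    · rw [Dtilde_comp_last]; exact hHd
    · intro j; rw [Dtilde_comp_castSucc]; exact diff_comp_init (hDbarj j)
  have hEtj : ∀ i (j : Fin (k+2)), Differentiable ℝ (fun q => extE (Y i) q j) := by
    intro i j
    refine Fin.lastCases ?_ ?_ j
    · rw [extE_comp_last]; exact differentiable_const _
    · intro j; rw [extE_comp_castSucc]; exact diff_comp_init (hYj i j)
  -- evaluation of `fderiv` of `Dtilde` and `extE`
  have hfDt : ∀ q v (j : Fin (k+1)),
      fderiv ℝ (Dtilde f H) q v (Fin.castSucc j)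
        = fderiv ℝ (Dbar f) (Fin.init q) (Fin.init v) j := by
    intro q v j
    rw [fderiv_apply_comp (fun j => (hDtj j).differentiableAt) v (Fin.castSucc j),
      Dtilde_comp_castSucc, fderiv_comp_init q v ((hDbarj j).differentiableAt),
      fderiv_apply_comp (fun j => (hDbarj j).differentiableAt)]
  have hfDtL : ∀ q v, fderiv ℝ (Dtilde f H) q v (Fin.last (k+1)) = fderiv ℝ H q v := by
    intro q v
    rw [fderiv_apply_comp (fun j => (hDtj j).differentiableAt) v (Fin.last (k+1)),
      Dtilde_comp_last]
  have hfEt : ∀ i q v (j : Fin (k+1)),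
      fderiv ℝ (extE (Y i)) q v (Fin.castSucc j)
        = fderiv ℝ (Y i) (Fin.init q) (Fin.init v) j := by
    intro i q v j
    rw [fderiv_apply_comp (fun j => (hEtj i j).differentiableAt) v (Fin.castSucc j),
      extE_comp_castSucc, fderiv_comp_init q v ((hYj i j).differentiableAt),
      fderiv_apply_comp (fun j => (hYj i j).differentiableAt)]
  have hfEtL : ∀ i q v, fderiv ℝ (extE (Y i)) q v (Fin.last (k+1)) = 0 := by
    intro i q v
    rw [fderiv_apply_comp (fun j => (hEtj i j).differentiableAt) v (Fin.last (k+1)),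
      extE_comp_last, fderiv_const_apply]
    rfl
  -- key bracket formula
  have hbr : ∀ i q, vbracket (extE (Y i)) (Dtilde f H) q
      = Fin.snoc (0 : Fin (k+1) → ℝ) (fderiv ℝ H q (extE (Y i) q)) := by
    intro i q
    funext j
    refine Fin.lastCases ?_ ?_ j
    · show fderiv ℝ (Dtilde f H) q (extE (Y i) q) (Fin.last (k+1))
          - fderiv ℝ (extE (Y i)) q (Dtilde f H q) (Fin.last (k+1)) = _
      rw [hfDtL, hfEtL, Fin.snoc_last, sub_zero]
    · intro j
      show fderiv ℝ (Dtilde f H) q (extE (Y i) q) (Fin.castSucc j)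
          - fderiv ℝ (extE (Y i)) q (Dtilde f H q) (Fin.castSucc j) = _
      rw [hfDt, hfEt, Fin.snoc_castSucc]
      have h1 : Fin.init (extE (Y i) q) = Y i (Fin.init q) := Fin.init_snoc _ _
      have h2 : Fin.init (Dtilde f H q) = Dbar f (Fin.init q) := Fin.init_snoc _ _
      rw [h1, h2]
      have := congrFun (hYsym i (Fin.init q)) j
      simpa [vbracket] using this
  constructor
  · constructor
    · intro h i q
      rcases Submodule.mem_span_singleton.1 (h i q) with ⟨c, hc⟩
      rw [hbr] at hc
      have h0 := congrFun hc (Fin.castSucc (0 : Fin (k+1)))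
      rw [Fin.snoc_castSucc, Pi.smul_apply, smul_eq_mul, Pi.zero_apply] at h0
      have hD0 : Dtilde f H q (Fin.castSucc (0 : Fin (k+1))) = 1 := by
        show (Fin.snoc (Dbar f (Fin.init q)) (H q) : Fin (k+2) → ℝ)
            (Fin.castSucc (0 : Fin (k+1))) = 1
        rw [Fin.snoc_castSucc]
        simp [Dbar]
      rw [hD0, mul_one] at h0
      have hl := congrFun hc (Fin.last (k+1))
      rw [Fin.snoc_last, Pi.smul_apply, smul_eq_mul, h0, zero_mul] at hl
      exact hl.symm
    · intro h i q
      rw [hbr, h i q]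
      have hz : (Fin.snoc (0 : Fin (k+1) → ℝ) (0:ℝ) : Fin (k+2) → ℝ) = 0 := by
        funext j
        refine Fin.lastCases ?_ ?_ j <;> simp
      rw [hz]
      exact Submodule.zero_mem _
  · intro hw
    have hWq : ∀ q : Fin (k+2) → ℝ, Wfield (k := k) q
        = Pi.single (Fin.last (k+1)) (1:ℝ) := fun _ => rfl
    have hWf : ∀ q : Fin (k+2) → ℝ, fderiv ℝ (Wfield (k := k)) q = 0 := fun q =>
      fderiv_const_apply _
    constructor
    · intro q
      funext j
      show fderiv ℝ (Dtilde f H) q (Wfield (k := k) q) j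
          - fderiv ℝ (Wfield (k := k)) q (Dtilde f H q) j = (0 : Fin (k+2) → ℝ) j
      rw [hWf q, hWq q, ContinuousLinearMap.zero_apply, Pi.zero_apply, sub_zero]
      refine Fin.lastCases ?_ ?_ j
      · rw [hfDtL]; exact hw q
      · intro j
        rw [hfDt, init_single_last]
        simp
    · intro i q
      funext j
      show fderiv ℝ (extE (Y i)) q (Wfield (k := k) q) j
          - fderiv ℝ (Wfield (k := k)) q (extE (Y i) q) j = (0 : Fin (k+2) → ℝ) j
      rw [hWf q, hWq q, ContinuousLinearMap.zero_apply, Pi.zero_apply, sub_zero]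
      refine Fin.lastCases ?_ ?_ j
      · rw [hfEtL]
      · intro j
        rw [hfEt, init_single_last]
        simp
end
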